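/- arXiv:1907.09513 — 2 statements merged into one kernel-verified Lean document; each statement's English description precedes it below -/
import Mathlib

section
/- If α is a limit ordinal such that L_α satisfies ZF⁻ (ZF without power set, with collection), then α is regular in L_{α+1}: there is no function f ∈ L_{α+1} mapping some δ < α cofinally into α. -/
open Ordinal

/-- First-order formulas in the language of set theory, with `n` free variables. -/
inductive EForm : ℕ → Type
  | mem {n} : Fin n → Fin n → EForm n
  | eq {n} : Fin n → Fin n → EForm n
  | not {n} : EForm n → EForm n
  | and {n} : EForm n → EForm n → EForm n
  | ex {n} : EForm (n + 1) → EForm n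

/-- Realization of a formula in the ∈-structure with domain `X` (a ZF-set), under a
valuation `v` of the free variables. -/
def ERealize (X : ZFSet) : {n : ℕ} → EForm n → (Fin n → ZFSet) → Prop
  | _, .mem i j, v => v i ∈ v j
  | _, .eq i j, v => v i = v j
  | _, .not φ, v => ¬ ERealize X φ v
  | _, .and φ ψ, v => ERealize X φ v ∧ ERealize X ψ v
  | _, .ex φ, v => ∃ y ∈ X, ERealize X φ (Fin.snoc v y)

/-- `S` is a subset of `X` definable over the ∈-structure `(X, ∈)` with parameters from `X`. -/
def IsDefinableSubset (X S : ZFSet) : Prop :=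
  S ⊆ X ∧ ∃ (n : ℕ) (φ : EForm (n + 1)) (p : Fin n → ZFSet),
    (∀ i, p i ∈ X) ∧ ∀ y ∈ X, (y ∈ S ↔ ERealize X φ (Fin.snoc p y))

/-- `Def X`: the set of all subsets of `X` definable over `(X, ∈)` with parameters. -/
noncomputable def DefSet (X : ZFSet) : ZFSet :=
  ZFSet.sep (fun S => IsDefinableSubset X S) (ZFSet.powerset X)

/-- Gödel's constructible hierarchy: `Lset 0 = ∅`, `Lset (o+1) = Def (Lset o)`,
and unions at limits. -/
noncomputable def Lset (o : Ordinal) : ZFSet :=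
  o.limitRecOn ∅ (fun _ ih => DefSet ih)
    (fun o _ ih => ZFSet.sUnion (ZFSet.range fun i : Shrink.{0} (Set.Iio o) =>
      ih ((equivShrink (Set.Iio o)).symm i).1 ((equivShrink (Set.Iio o)).symm i).2))

/-- The von Neumann ordinal (as a ZF-set) corresponding to an ordinal. -/
noncomputable def vN (o : Ordinal) : ZFSet :=
  o.limitRecOn ∅ (fun _ ih => insert ih ih)
    (fun o _ ih => ZFSet.sUnion (ZFSet.range fun i : Shrink.{0} (Set.Iio o) =>
      ih ((equivShrink (Set.Iio o)).symm i).1 ((equivShrink (Set.Iio o)).symm i).2))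

/-- Extensionality relativized to `X`. -/
def AxExt (X : ZFSet) : Prop :=
  ∀ a ∈ X, ∀ b ∈ X, (∀ z ∈ X, (z ∈ a ↔ z ∈ b)) → a = b

/-- Pairing relativized to `X`. -/
def AxPair (X : ZFSet) : Prop :=
  ∀ a ∈ X, ∀ b ∈ X, ∃ c ∈ X, ∀ z ∈ X, (z ∈ c ↔ z = a ∨ z = b)

/-- Union relativized to `X`. -/
def AxUnion (X : ZFSet) : Prop :=
  ∀ a ∈ X, ∃ u ∈ X, ∀ z ∈ X, (z ∈ u ↔ ∃ w ∈ X, w ∈ a ∧ z ∈ w)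

/-- Infinity relativized to `X`. -/
def AxInf (X : ZFSet) : Prop :=
  ∃ I ∈ X, (∅ : ZFSet) ∈ I ∧ ∀ z ∈ I, insert z z ∈ I

/-- Foundation relativized to `X`. -/
def AxFound (X : ZFSet) : Prop :=
  ∀ a ∈ X, a ≠ ∅ → ∃ z ∈ a, ∀ w ∈ z, w ∉ a

/-- The separation (comprehension) scheme relativized to `X`, with parameters. -/
def AxSep (X : ZFSet) : Prop :=
  ∀ (n : ℕ) (φ : EForm (n + 1)) (p : Fin n → ZFSet), (∀ i, p i ∈ X) →
    ∀ A ∈ X, ∃ S ∈ X, ∀ z ∈ X, (z ∈ S ↔ z ∈ A ∧ ERealize X φ (Fin.snoc p z))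

/-- The collection scheme relativized to `X`, with parameters: formulas here have
`n` parameter variables followed by the variables `x` and `y`. -/
def AxColl (X : ZFSet) : Prop :=
  ∀ (n : ℕ) (φ : EForm (n + 2)) (p : Fin n → ZFSet), (∀ i, p i ∈ X) →
    ∀ A ∈ X, (∀ x ∈ A, ∃ y ∈ X, ERealize X φ (Fin.snoc (Fin.snoc p x) y)) →
      ∃ B ∈ X, ∀ x ∈ A, ∃ y ∈ B, ERealize X φ (Fin.snoc (Fin.snoc p x) y)

/-- `X ⊨ ZF⁻`: ZF without power set, formulated with the collection scheme. -/
def ZFminus (X : ZFSet) : Prop :=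
  AxExt X ∧ AxPair X ∧ AxUnion X ∧ AxInf X ∧ AxFound X ∧ AxSep X ∧ AxColl X

/-- `f` is (the ZF-set coding) a function from the von Neumann ordinal `δ` to `α`
whose range is cofinal in `α`. -/
def IsCofinalMap (δ α : Ordinal) (f : ZFSet) : Prop :=
  ZFSet.IsFunc (vN δ) (vN α) f ∧
    ∀ β < α, ∃ ι < δ, ∃ γ < α, β ≤ γ ∧ (vN ι).pair (vN γ) ∈ f


/-!
Let `f ∈ L_{α+1}` be defined over `L_α` by `φ` with parameters. For every `ξ < δ` the pair
`(ξ, f ξ)` is an element of `L_α` that `L_α` picks out from `ξ` by `φ` together with "the first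
coordinate is `ξ`", so Collection in `L_α` yields one `C ∈ L_α` containing a pair `(ξ, f ξ)` for
each `ξ < δ`. Every value of `f` then has rank below `rank C < α`, so `f` is not cofinal. The
domain `δ` is available in `L_α` because `δ ∈ L_{δ+1}` is the set of ordinals of `L_δ`, and
"ordinal" is expressible as "transitive set of transitive sets".
-/

universe u

namespace EForm

def imp {n : ℕ} (φ ψ : EForm n) : EForm n := .not (.and φ (.not ψ))

def all {n : ℕ} (φ : EForm (n + 1)) : EForm n := .not (.ex (.not φ))

def rename : {m k : ℕ} → (Fin m → Fin k) → EForm m → EForm k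
  | _, _, ρ, .mem i j => .mem (ρ i) (ρ j)
  | _, _, ρ, .eq i j => .eq (ρ i) (ρ j)
  | _, _, ρ, .not φ => .not (rename ρ φ)
  | _, _, ρ, .and φ ψ => .and (rename ρ φ) (rename ρ ψ)
  | _, _, ρ, .ex φ => .ex (rename (Fin.snoc (Fin.castSucc ∘ ρ) (Fin.last _)) φ)

/-- `∀ a ∈ y, ∀ z ∈ a, z ∈ y ∧ ∀ w ∈ z, w ∈ a`: `y` is a transitive set of transitive sets. -/
def isOrdinal : EForm 1 :=
  all ((mem 1 0).imp (all ((mem 2 1).imp ((mem 2 0).and (all ((mem 3 2).imp (mem 3 1)))))))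

/-- In context `p₀, …, pₙ₋₁, x, y`: `∃ a ∈ y, ∀ w ∈ a, w = x`, which says `x` is the first
coordinate of an ordered pair `y`. -/
def fstEq (n : ℕ) : EForm (n + 2) :=
  ex ((mem (Fin.last _) (Fin.last _).castSucc).and
    (all ((mem (Fin.last _) (Fin.last _).castSucc).imp
      (eq (Fin.last _) (Fin.last n).castSucc.castSucc.castSucc))))

end EForm

lemma ZFSet.mem_of_mem_pair_left {a b c : ZFSet.{u}} (h : c ∈ a.pair b) : a ∈ c := by
  rcases ZFSet.mem_pair.1 h with rfl | rfl <;> simp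

lemma ZFSet.rank_lt_rank_pair_right (a b : ZFSet.{u}) : b.rank < (a.pair b).rank :=
  (ZFSet.rank_lt_of_mem (ZFSet.mem_pair.2 (Or.inr rfl) : b ∈ ({a, b} : ZFSet))).trans
    (ZFSet.rank_lt_of_mem (ZFSet.mem_pair.2 (Or.inr rfl)))

section Realize

variable {X : ZFSet.{u}} {n : ℕ}

@[simp] lemma ERealize_imp {φ ψ : EForm n} {v : Fin n → ZFSet.{u}} :
    ERealize X (φ.imp ψ) v ↔ (ERealize X φ v → ERealize X ψ v) := by
  simp [EForm.imp, ERealize]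

@[simp] lemma ERealize_all {φ : EForm (n + 1)} {v : Fin n → ZFSet.{u}} :
    ERealize X φ.all v ↔ ∀ y ∈ X, ERealize X φ (Fin.snoc v y) := by
  simp [EForm.all, ERealize]

lemma ERealize_rename : ∀ {m k : ℕ} (ρ : Fin m → Fin k) (φ : EForm m) (v : Fin k → ZFSet.{u}),
    ERealize X (φ.rename ρ) v ↔ ERealize X φ (v ∘ ρ)
  | _, _, _, .mem _ _, _ | _, _, _, .eq _ _, _ => Iff.rfl
  | _, _, ρ, .not φ, v => not_congr (ERealize_rename ρ φ v)
  | _, _, ρ, .and φ ψ, v => and_congr (ERealize_rename ρ φ v) (ERealize_rename ρ ψ v)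
  | _, _, ρ, .ex φ, v => by
    refine exists_congr fun y => and_congr_right fun _ => ?_
    rw [ERealize_rename]
    congr!
    funext i
    refine Fin.lastCases ?_ (fun i => ?_) i <;> simp

lemma ERealize_isOrdinal (hX : X.IsTransitive) {v : Fin 1 → ZFSet.{u}} (hv : v 0 ∈ X) :
    ERealize X EForm.isOrdinal v ↔ (v 0).IsOrdinal := by
  have hsub := hX.subset_of_mem hv
  have hunfold : ERealize X EForm.isOrdinal v ↔
      ∀ a ∈ X, a ∈ v 0 → ∀ z ∈ X, z ∈ a → z ∈ v 0 ∧ ∀ w ∈ X, w ∈ z → w ∈ a := by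
    simp [EForm.isOrdinal, ERealize, Fin.snoc]
  rw [hunfold, ZFSet.isOrdinal_iff_forall_mem_isTransitive]
  constructor
  · intro H
    refine ⟨fun a ha z hz => (H a (hsub ha) ha z (hX.mem_trans hz (hsub ha)) hz).1,
      fun a ha z hz w hw => ?_⟩
    have hzX : z ∈ X := hX.mem_trans hz (hsub ha)
    exact (H a (hsub ha) ha z hzX hz).2 w (hX.mem_trans hw hzX) hw
  · rintro ⟨h0, h1⟩ a _ ha z _ hz
    exact ⟨h0.mem_trans hz ha, fun w _ hw => (h1 a ha).mem_trans hw hz⟩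

lemma ERealize_fstEq_pair (hX : X.IsTransitive) (p : Fin n → ZFSet.{u}) {x a b : ZFSet.{u}}
    (h : a.pair b ∈ X) :
    ERealize X (EForm.fstEq n) (Fin.snoc (Fin.snoc p x) (a.pair b)) ↔ a = x := by
  simp only [EForm.fstEq, ERealize, ERealize_all, ERealize_imp, Fin.snoc_last,
    Fin.snoc_castSucc]
  constructor
  · rintro ⟨c, hcX, hc, hcx⟩
    have hac := ZFSet.mem_of_mem_pair_left hc
    exact hcx a (hX.mem_trans hac hcX) hac
  · rintro rfl
    have ha : {a} ∈ a.pair b := by simp [ZFSet.pair]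
    exact ⟨{a}, hX.mem_trans ha h, ha, fun w _ hw => ZFSet.mem_singleton.1 hw⟩

end Realize

lemma mem_DefSet {X S : ZFSet.{u}} : S ∈ DefSet X ↔ IsDefinableSubset X S := by
  rw [DefSet, ZFSet.mem_sep, ZFSet.mem_powerset]
  exact and_iff_right_of_imp And.left

lemma mem_DefSet_of_mem {X x : ZFSet.{u}} (hX : X.IsTransitive) (hx : x ∈ X) :
    x ∈ DefSet X :=
  mem_DefSet.2 ⟨hX.subset_of_mem hx, 1, .mem 1 0, fun _ => x, fun _ => hx, fun _ _ => Iff.rfl⟩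

lemma mem_sUnion_range_shrink {o : Ordinal} {F : Ordinal → ZFSet} {x : ZFSet} :
    x ∈ ZFSet.sUnion (ZFSet.range fun i : Shrink.{0} (Set.Iio o) =>
      F ((equivShrink (Set.Iio o)).symm i).1) ↔ ∃ β < o, x ∈ F β := by
  simp only [ZFSet.mem_sUnion, ZFSet.mem_range]
  constructor
  · rintro ⟨_, ⟨i, rfl⟩, hx⟩
    exact ⟨_, ((equivShrink (Set.Iio o)).symm i).2, hx⟩
  · rintro ⟨β, hβ, hx⟩
    exact ⟨_, ⟨equivShrink (Set.Iio o) ⟨β, hβ⟩, by simp⟩, hx⟩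

lemma Lset_succ (o : Ordinal) : Lset (o + 1) = DefSet (Lset o) := by
  rw [Lset, Ordinal.limitRecOn_add_one]
  rfl

lemma mem_Lset_of_isSuccLimit {o : Ordinal} (ho : Order.IsSuccLimit o) {x : ZFSet} :
    x ∈ Lset o ↔ ∃ β < o, x ∈ Lset β := by
  rw [Lset, Ordinal.limitRecOn_limit _ _ _ _ ho]
  exact mem_sUnion_range_shrink (F := Lset)

lemma Lset_isTransitive (o : Ordinal) : (Lset o).IsTransitive := by
  induction o using Ordinal.limitRecOn with
  | zero => simp [Lset]
  | add_one o ih =>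
    rw [Lset_succ]
    exact fun y hy z hz => mem_DefSet_of_mem ih ((mem_DefSet.1 hy).1 hz)
  | limit o ho ih =>
    intro y hy z hz
    obtain ⟨β, hβ, hyβ⟩ := (mem_Lset_of_isSuccLimit ho).1 hy
    exact (mem_Lset_of_isSuccLimit ho).2 ⟨β, hβ, ih β hβ y hyβ hz⟩

lemma Lset_mono {β o : Ordinal} (h : β ≤ o) : Lset β ⊆ Lset o := by
  induction o using Ordinal.limitRecOn with
  | zero => rw [nonpos_iff_eq_zero.1 h]
  | add_one o ih =>
    rcases h.eq_or_lt with rfl | h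
    · exact subset_rfl
    · have hsucc : Lset o ⊆ Lset (o + 1) := fun x hx => by
        rw [Lset_succ]; exact mem_DefSet_of_mem (Lset_isTransitive o) hx
      exact (ih (Order.lt_add_one_iff.1 h)).trans hsucc
  | limit o ho ih =>
    rcases h.eq_or_lt with rfl | h
    · exact subset_rfl
    · exact fun x hx => (mem_Lset_of_isSuccLimit ho).2 ⟨β, h, hx⟩

lemma rank_Lset_le (o : Ordinal) : (Lset o).rank ≤ o := by
  induction o using Ordinal.limitRecOn with
  | zero => simp [Lset]
  | add_one o ih =>
    rw [ZFSet.rank_le_iff, Lset_succ]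
    intro y hy
    exact ((ZFSet.rank_mono (mem_DefSet.1 hy).1).trans ih).trans_lt (lt_add_one o)
  | limit o ho ih =>
    rw [ZFSet.rank_le_iff]
    intro y hy
    obtain ⟨β, hβ, hyβ⟩ := (mem_Lset_of_isSuccLimit ho).1 hy
    exact ((ZFSet.rank_lt_of_mem hyβ).trans_le (ih β hβ)).trans hβ

lemma rank_lt_of_mem_Lset {o : Ordinal} {x : ZFSet} (h : x ∈ Lset o) : x.rank < o :=
  (ZFSet.rank_lt_of_mem h).trans_le (rank_Lset_le o)

lemma vN_eq_toZFSet (o : Ordinal) : vN o = o.toZFSet := by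
  induction o using Ordinal.limitRecOn with
  | zero => simp [vN]
  | add_one o ih =>
    rw [vN, Ordinal.limitRecOn_add_one, Ordinal.toZFSet_add_one, ← ih]
    rfl
  | limit o ho ih =>
    ext x
    rw [vN, Ordinal.limitRecOn_limit _ _ _ _ ho]
    refine (mem_sUnion_range_shrink (F := vN)).trans ⟨?_, ?_⟩
    · rintro ⟨β, hβ, hx⟩
      obtain ⟨a, ha, rfl⟩ := Ordinal.mem_toZFSet_iff.1 (ih β hβ ▸ hx)
      exact Ordinal.mem_toZFSet_iff.2 ⟨a, ha.trans hβ, rfl⟩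
    · intro hx
      obtain ⟨a, ha, rfl⟩ := Ordinal.mem_toZFSet_iff.1 hx
      have ha' : a + 1 < o := ho.add_one_lt ha
      exact ⟨a + 1, ha', ih _ ha' ▸ Ordinal.toZFSet_mem_toZFSet_iff.2 (lt_add_one a)⟩

lemma toZFSet_mem_Lset_succ (o : Ordinal) : o.toZFSet ∈ Lset (o + 1) := by
  induction o using WellFoundedLT.induction with
  | _ o ih =>
    have hsub : o.toZFSet ⊆ Lset o := fun x hx => by
      obtain ⟨β, hβ, rfl⟩ := Ordinal.mem_toZFSet_iff.1 hx
      exact Lset_mono (Order.add_one_le_of_lt hβ) (ih β hβ)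
    rw [Lset_succ, mem_DefSet]
    refine ⟨hsub, 0, EForm.isOrdinal, Fin.elim0, (·.elim0), fun y hy => ?_⟩
    rw [ERealize_isOrdinal (Lset_isTransitive o) hy]
    refine ⟨fun h => ?_, fun h => ?_⟩
    · obtain ⟨β, -, rfl⟩ := Ordinal.mem_toZFSet_iff.1 h
      exact ZFSet.isOrdinal_toZFSet β
    · exact Ordinal.mem_toZFSet_iff.2 ⟨_, rank_lt_of_mem_Lset hy, h.toZFSet_rank_eq⟩

lemma toZFSet_mem_Lset {β o : Ordinal} (h : β < o) : β.toZFSet ∈ Lset o :=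
  Lset_mono (Order.add_one_le_of_lt h) (toZFSet_mem_Lset_succ β)

lemma AxColl.exists_forall_pair_mem {X A B f : ZFSet.{u}} (hColl : AxColl X)
    (hX : X.IsTransitive) (hf : IsDefinableSubset X f) (hfun : A.IsFunc B f) (hA : A ∈ X) :
    ∃ C ∈ X, ∀ x ∈ A, ∃ b, x.pair b ∈ f ∧ x.pair b ∈ C := by
  obtain ⟨hfX, n, φ, p, hp, hφ⟩ := hf
  have hskip : ∀ x y : ZFSet.{u},
      Fin.snoc (Fin.snoc p x) y ∘ Fin.succAbove (Fin.last n).castSucc = Fin.snoc p y := by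
    intro x y
    funext i
    refine Fin.lastCases ?_ (fun i => ?_) i <;> simp
  let ψ : EForm (n + 2) := (φ.rename (Fin.succAbove (Fin.last n).castSucc)).and (EForm.fstEq n)
  have hψ : ∀ x, ∀ y ∈ X, ERealize X ψ (Fin.snoc (Fin.snoc p x) y) ↔
      y ∈ f ∧ ERealize X (EForm.fstEq n) (Fin.snoc (Fin.snoc p x) y) := by
    intro x y hy
    simp only [ψ, ERealize, ERealize_rename, hskip, hφ y hy]
  obtain ⟨C, hC, hxC⟩ := hColl n ψ p hp A hA fun x hx => by
    obtain ⟨b, hb, -⟩ := hfun.2 x hx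
    exact ⟨_, hfX hb, (hψ x _ (hfX hb)).2 ⟨hb, (ERealize_fstEq_pair hX p (hfX hb)).2 rfl⟩⟩
  refine ⟨C, hC, fun x hx => ?_⟩
  obtain ⟨y, hyC, hy⟩ := hxC x hx
  obtain ⟨hyf, hfst⟩ := (hψ x y (hX.mem_trans hyC hC)).1 hy
  obtain ⟨a, -, b, -, rfl⟩ := ZFSet.mem_prod.1 (hfun.1 hyf)
  obtain rfl := (ERealize_fstEq_pair hX p (hfX hyf)).1 hfst
  exact ⟨b, hyf, hyC⟩

theorem stmt2_general (α : Ordinal) (hZF : ZFminus (Lset α)) :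
    ¬ ∃ (δ : Ordinal) (f : ZFSet), δ < α ∧ f ∈ Lset (α + 1) ∧ IsCofinalMap δ α f := by
  obtain ⟨-, -, -, -, -, -, hColl⟩ := hZF
  rintro ⟨δ, f, hδ, hf, hfun, hcof⟩
  simp only [vN_eq_toZFSet] at hfun hcof
  rw [Lset_succ, mem_DefSet] at hf
  obtain ⟨C, hC, hCf⟩ := hColl.exists_forall_pair_mem (Lset_isTransitive α) hf hfun
    (toZFSet_mem_Lset hδ)
  obtain ⟨ι, hι, γ, -, hCγ, hιγ⟩ := hcof C.rank (rank_lt_of_mem_Lset hC)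
  obtain ⟨b, hbf, hbC⟩ := hCf ι.toZFSet (Ordinal.toZFSet_mem_toZFSet_iff.2 hι)
  obtain rfl : b = γ.toZFSet := (hfun.2 _ (Ordinal.toZFSet_mem_toZFSet_iff.2 hι)).unique hbf hιγ
  have hγC : γ < C.rank := by
    simpa using (ZFSet.rank_lt_rank_pair_right ι.toZFSet _).trans (ZFSet.rank_lt_of_mem hbC)
  exact hCγ.not_gt hγC

/-- If `α` is a limit ordinal such that `L_α ⊨ ZF⁻`, then `α` is regular in `L_{α+1}`:
no function `f ∈ L_{α+1}` maps some `δ < α` cofinally into `α`. -/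
theorem stmt2 (α : Ordinal) (hα : Order.IsSuccLimit α) (hZF : ZFminus (Lset α)) :
    ¬ ∃ (δ : Ordinal) (f : ZFSet), δ < α ∧ f ∈ Lset (α + 1) ∧ IsCofinalMap δ α f :=
  stmt2_general α hZF
end

section
/- Consider an abstract machine whose configurations are elements of ω × α^n for fixed n, evolving along ordinal time by a deterministic successor rule and the liminf rule at limits (each coordinate at a limit time is the liminf of its earlier values, with values ≥ α reset to 0). If there exist times ι < ξ such that the configurations at times ι and ξ are equal and every configuration at a time in (ι, ξ) is coordinatewise ≥ the configuration at time ι, then for every ordinal γ the configuration at time ι + δ·γ equals the configuration at time ι, where δ satisfies ι + δ = ξ. In particular the computation never reaches a halting configuration after time ι. -/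
/-!
Shift time so that the loop starts at `0`; the shifted run is again a liminf computation, since
the liminf at `ι + e` only sees the values on `[ι, ι + e)`. One then shows `c τ = c (τ % δ)`
by induction on `τ`. At successors this is determinism together with `c δ = c 0`. A limit `τ` is
either `δ * p + e` with `e ≤ δ` a limit, and then the run on `[δ * p, τ)` repeats the run on
`[0, e)`, so the liminfs at `τ` and at `e` agree; or `τ = δ * q` with `q` a limit, and then every
tail below `τ` contains a copy of `c 0`, which bounds all configurations below `τ` from below, so
every liminf at `τ` is the corresponding coordinate of `c 0`.
-/

open Ordinal

universe u v w

/-- `oliminf l c = sup_{σ<l} inf {c τ : σ ≤ τ < l}`. -/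
noncomputable def oliminf (l : Ordinal) (c : Ordinal → Ordinal) : Ordinal :=
  ⨆ σ : Set.Iio l, sInf (c '' Set.Ico σ.1 l)

lemma Ordinal.mod_add_mod (a b c : Ordinal) : (a % c + b) % c = (a + b) % c := by
  conv_rhs => rw [← div_add_mod a c, add_assoc, mul_add_mod_self]

lemma Ordinal.eq_mul_add_or_eq_mul_of_isSuccLimit {δ τ : Ordinal} (hδ : δ ≠ 0)
    (hτ : Order.IsSuccLimit τ) :
    (∃ p e, Order.IsSuccLimit e ∧ e ≤ δ ∧ τ = δ * p + e) ∨
      ∃ q, Order.IsSuccLimit q ∧ τ = δ * q := by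
  have hτ_eq : τ = δ * (τ / δ) + τ % δ := (div_add_mod τ δ).symm
  rcases zero_or_succ_or_isSuccLimit (τ % δ) with hr | ⟨s, hs⟩ | hr
  · rw [hr, add_zero] at hτ_eq
    rcases zero_or_succ_or_isSuccLimit (τ / δ) with hq | ⟨p, hp⟩ | hq
    · exact absurd (hτ_eq.trans (by rw [hq, mul_zero])) hτ.pos.ne'
    · rw [← hp, mul_succ] at hτ_eq
      rcases zero_or_succ_or_isSuccLimit δ with hδ0 | ⟨d, hd⟩ | hδlim
      · exact absurd hδ0 hδ
      · refine absurd ?_ (hτ.succ_ne (δ * p + d))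
        rw [hτ_eq, ← hd, Order.succ_eq_add_one, Order.succ_eq_add_one, add_assoc]
      · exact Or.inl ⟨p, δ, hδlim, le_rfl, hτ_eq⟩
    · exact Or.inr ⟨τ / δ, hq, hτ_eq⟩
  · refine absurd ?_ (hτ.succ_ne (δ * (τ / δ) + s))
    rw [Order.succ_eq_add_one, add_assoc, ← Order.succ_eq_add_one, hs, ← hτ_eq]
  · exact Or.inl ⟨τ / δ, τ % δ, hr, (mod_lt τ hδ).le, hτ_eq⟩

lemma Ordinal.bddAbove_range_natCast {ι : Type*} (f : ι → ℕ) :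
    BddAbove (Set.range fun i => (f i : Ordinal.{u})) :=
  ⟨ω, by rintro _ ⟨i, rfl⟩; exact (natCast_lt_omega0 _).le⟩

section oliminf

variable {l l' : Ordinal.{u}} {g g' : Ordinal.{u} → Ordinal.{v}}

lemma bddAbove_range_sInf_image_Ico (hg : BddAbove (Set.range g)) :
    BddAbove (Set.range fun σ : Set.Iio l => sInf (g '' Set.Ico σ.1 l)) := by
  obtain ⟨B, hB⟩ := hg
  refine ⟨B, ?_⟩
  rintro _ ⟨⟨σ, hσ⟩, rfl⟩
  exact (csInf_le' (Set.mem_image_of_mem g (Set.left_mem_Ico.2 hσ))).trans (hB ⟨σ, rfl⟩)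

lemma oliminf_le_oliminf (hg' : BddAbove (Set.range g'))
    (h : ∀ σ < l, ∃ σ' < l', g' '' Set.Ico σ' l' ⊆ g '' Set.Ico σ l) :
    oliminf l g ≤ oliminf l' g' := by
  refine Ordinal.iSup_le fun ⟨σ, hσ⟩ => ?_
  obtain ⟨σ', hσ', hsub⟩ := h σ hσ
  calc sInf (g '' Set.Ico σ l)
      ≤ sInf (g' '' Set.Ico σ' l') :=
        csInf_le_csInf (OrderBot.bddBelow _) ⟨g' σ', σ', ⟨le_rfl, hσ'⟩, rfl⟩ hsub
    _ ≤ oliminf l' g' := le_ciSup (bddAbove_range_sInf_image_Ico hg') ⟨σ', hσ'⟩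

lemma oliminf_congr (h : ∀ τ < l, g τ = g' τ) : oliminf l g = oliminf l g' := by
  have himage : ∀ σ, g '' Set.Ico σ l = g' '' Set.Ico σ l := fun σ =>
    Set.image_congr fun τ hτ => h τ hτ.2
  unfold oliminf
  simp only [himage]

lemma oliminf_add (a : Ordinal.{u}) {e : Ordinal.{u}} (he : 0 < e) (hg : BddAbove (Set.range g)) :
    oliminf (a + e) g = oliminf e fun u => g (a + u) := by
  apply le_antisymm
  · refine oliminf_le_oliminf (hg.mono (Set.range_comp_subset_range _ g)) fun σ hσ =>
      ⟨σ - a, sub_lt_of_lt_add hσ he, ?_⟩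
    rintro _ ⟨u, ⟨hσu, hue⟩, rfl⟩
    exact ⟨a + u, ⟨(le_add_sub σ a).trans ((add_le_add_iff_left a).2 hσu),
      (add_lt_add_iff_left a).2 hue⟩, rfl⟩
  · refine oliminf_le_oliminf hg fun σ hσ => ⟨a + σ, (add_lt_add_iff_left a).2 hσ, ?_⟩
    rintro _ ⟨τ, ⟨hστ, hτe⟩, rfl⟩
    obtain ⟨u, rfl⟩ := exists_add_of_le (le_self_add.trans hστ)
    exact ⟨u, ⟨(add_le_add_iff_left a).1 hστ, (add_lt_add_iff_left a).1 hτe⟩, rfl⟩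

lemma oliminf_eq_of_le_of_frequently_eq {x : Ordinal.{v}} (hl : 0 < l)
    (hg : BddAbove (Set.range g)) (hle : ∀ τ < l, x ≤ g τ)
    (hfreq : ∀ σ < l, ∃ τ ∈ Set.Ico σ l, g τ = x) : oliminf l g = x := by
  apply le_antisymm
  · refine Ordinal.iSup_le fun ⟨σ, hσ⟩ => ?_
    obtain ⟨τ, hτ, hgτ⟩ := hfreq σ hσ
    exact hgτ ▸ csInf_le' ⟨τ, hτ, rfl⟩
  · calc x ≤ sInf (g '' Set.Ico 0 l) := by
          refine le_csInf ⟨g 0, 0, ⟨le_rfl, hl⟩, rfl⟩ ?_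
          rintro _ ⟨τ, hτ, rfl⟩
          exact hle τ hτ.2
      _ ≤ oliminf l g := le_ciSup (bddAbove_range_sInf_image_Ico hg) ⟨0, hl⟩

end oliminf

/-- The state liminf of a run is a natural number cast to an ordinal, which
`Cardinal.toNat ∘ card` reads back. -/
noncomputable def limitConfig {n : ℕ} (α : Ordinal.{v}) (s : Ordinal.{w})
    (r : Fin n → Ordinal.{v}) : ℕ × (Fin n → Ordinal.{v}) :=
  (Cardinal.toNat s.card, fun i => if r i = α then 0 else r i)

structure IsLiminfRun {n : ℕ} (α : Ordinal.{v})
    (F : ℕ × (Fin n → Ordinal.{v}) → ℕ × (Fin n → Ordinal.{v}))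
    (c : Ordinal.{u} → ℕ × (Fin n → Ordinal.{v})) : Prop where
  succ : ∀ τ, c (τ + 1) = F (c τ)
  reg_lt : ∀ τ i, (c τ).2 i < α
  limit : ∀ l, Order.IsSuccLimit l →
    c l = limitConfig α (oliminf l fun τ => ((c τ).1 : Ordinal.{w}))
      fun i => oliminf l fun τ => (c τ).2 i

namespace IsLiminfRun

variable {n : ℕ} {α : Ordinal.{v}}
  {F : ℕ × (Fin n → Ordinal.{v}) → ℕ × (Fin n → Ordinal.{v})}
  {c : Ordinal.{u} → ℕ × (Fin n → Ordinal.{v})}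

lemma bddAbove_reg (hc : IsLiminfRun.{u, v, w} α F c) (i : Fin n) :
    BddAbove (Set.range fun τ => (c τ).2 i) :=
  ⟨α, by rintro _ ⟨τ, rfl⟩; exact (hc.reg_lt τ i).le⟩

lemma comp_add (hc : IsLiminfRun.{u, v, w} α F c) (a : Ordinal.{u}) :
    IsLiminfRun.{u, v, w} α F fun τ => c (a + τ) where
  succ τ := by rw [← add_assoc]; exact hc.succ _
  reg_lt τ := hc.reg_lt (a + τ)
  limit l hl := by
    rw [hc.limit _ (isSuccLimit_add a hl),
      oliminf_add a hl.pos (bddAbove_range_natCast fun τ => (c τ).1)]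
    congr 1
    funext i
    exact oliminf_add a hl.pos (hc.bddAbove_reg i)

lemma apply_add_eq_of_forall_lt (hc : IsLiminfRun.{u, v, w} α F c) {a e : Ordinal.{u}}
    (he : Order.IsSuccLimit e) (h : ∀ u < e, c (a + u) = c u) : c (a + e) = c e := by
  rw [(hc.comp_add a).limit e he, hc.limit e he, oliminf_congr fun u hu => by rw [h u hu]]
  congr 1
  funext i
  exact oliminf_congr fun u hu => by rw [h u hu]

lemma apply_eq_of_le_of_frequently_eq (hc : IsLiminfRun.{u, v, w} α F c) {l : Ordinal.{u}}
    (hl : Order.IsSuccLimit l) {x : ℕ × (Fin n → Ordinal.{v})} (hx : ∀ i, x.2 i < α)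
    (hle : ∀ τ < l, x ≤ c τ) (hfreq : ∀ σ < l, ∃ τ ∈ Set.Ico σ l, c τ = x) :
    c l = x := by
  have hstate : (oliminf l fun τ => ((c τ).1 : Ordinal.{w})) = x.1 :=
    oliminf_eq_of_le_of_frequently_eq hl.pos (bddAbove_range_natCast fun τ => (c τ).1)
      (fun τ hτ => Nat.cast_le.2 (hle τ hτ).1) fun σ hσ =>
        (hfreq σ hσ).imp fun τ ⟨hτ, hcτ⟩ => ⟨hτ, by rw [hcτ]⟩
  have hreg : ∀ i, (oliminf l fun τ => (c τ).2 i) = x.2 i := fun i =>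
    oliminf_eq_of_le_of_frequently_eq hl.pos (hc.bddAbove_reg i)
      (fun τ hτ => (hle τ hτ).2 i) fun σ hσ =>
        (hfreq σ hσ).imp fun τ ⟨hτ, hcτ⟩ => ⟨hτ, by rw [hcτ]⟩
  rw [hc.limit l hl]
  ext1
  · rw [limitConfig, hstate, card_nat, Cardinal.toNat_natCast]
  · funext i
    simp only [limitConfig, hreg, (hx i).ne, if_false]

theorem apply_eq_apply_mod (hc : IsLiminfRun.{u, v, w} α F c) {δ : Ordinal.{u}} (hδ : δ ≠ 0)
    (hper : c δ = c 0) (hge : ∀ τ < δ, c 0 ≤ c τ) (τ : Ordinal.{u}) :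
    c τ = c (τ % δ) := by
  have hle_period : ∀ ρ ≤ δ, c ρ = c (ρ % δ) := by
    intro ρ hρ
    rcases hρ.lt_or_eq with hρ | rfl
    · rw [mod_eq_of_lt hρ]
    · rw [mod_self, hper]
  induction τ using WellFoundedLT.induction with
  | _ τ IH =>
  rcases zero_or_succ_or_isSuccLimit τ with rfl | ⟨σ, rfl⟩ | hτ
  · rw [zero_mod]
  · calc c (Order.succ σ) = F (c (σ % δ)) := by
          rw [Order.succ_eq_add_one, hc.succ, IH σ (Order.lt_succ σ)]
      _ = c (σ % δ + 1) := (hc.succ _).symm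
      _ = c ((σ % δ + 1) % δ) := hle_period _ (Order.add_one_le_of_lt (mod_lt σ hδ))
      _ = c (Order.succ σ % δ) := by rw [mod_add_mod, Order.succ_eq_add_one]
  rcases eq_mul_add_or_eq_mul_of_isSuccLimit hδ hτ with
    ⟨p, e, he, heδ, rfl⟩ | ⟨q, hq, rfl⟩
  · have hrepeat : ∀ u < e, c (δ * p + u) = c u := fun u hu => by
      rw [IH _ ((add_lt_add_iff_left _).2 hu), mul_add_mod_self,
        mod_eq_of_lt (hu.trans_le heδ)]
    rw [hc.apply_add_eq_of_forall_lt he hrepeat, mul_add_mod_self, hle_period e heδ]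
  · rw [mul_mod]
    refine hc.apply_eq_of_le_of_frequently_eq hτ (hc.reg_lt 0)
      (fun ρ hρ => IH ρ hρ ▸ hge _ (mod_lt ρ hδ)) fun σ hσ => ?_
    have hnext : δ * Order.succ (σ / δ) < δ * q :=
      (mul_lt_mul_iff_of_pos_left (pos_iff_ne_zero.2 hδ)).2
        (hq.succ_lt ((lt_mul_iff_div_lt hδ).1 hσ))
    exact ⟨_, ⟨(lt_mul_succ_div σ hδ).le, hnext⟩, by rw [IH _ hnext, mul_mod]⟩

end IsLiminfRun

/-- A machine with configurations in `ω × α^n`, evolving along ordinal time by a deterministic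
successor rule `F` and the liminf rule at limits (with register values that reach `α` reset
to `0`).  If there are times `ι < ξ` with equal configurations such that every configuration
strictly in between is coordinatewise `≥` the one at time `ι`, then for every ordinal `γ` the
configuration at time `ι + δ·γ` (where `ι + δ = ξ`) equals the configuration at time `ι`; in
particular every configuration occurring at a time `≥ ι` already occurs at some time in
`[ι, ξ)`, so no halting configuration avoided up to time `ξ` is ever reached after time `ι`. -/
theorem stmt4 (α : Ordinal) (n : ℕ)
    (F : ℕ × (Fin n → Ordinal) → ℕ × (Fin n → Ordinal))
    (c : Ordinal → ℕ × (Fin n → Ordinal))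
    (hreg : ∀ τ i, (c τ).2 i < α)
    (hsucc : ∀ τ, c (τ + 1) = F (c τ))
    (hlim_state : ∀ l : Ordinal, Order.IsSuccLimit l →
      ((c l).1 : Ordinal) = oliminf l fun τ => ((c τ).1 : Ordinal))
    (hlim_reg : ∀ l : Ordinal, Order.IsSuccLimit l → ∀ i,
      (c l).2 i = if oliminf l (fun τ => (c τ).2 i) = α then 0
                  else oliminf l (fun τ => (c τ).2 i))
    (ι ξ δ : Ordinal) (hιξ : ι < ξ) (hδ : ι + δ = ξ)
    (heq : c ι = c ξ)
    (hge : ∀ τ, ι < τ → τ < ξ →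
      (c ι).1 ≤ (c τ).1 ∧ ∀ i, (c ι).2 i ≤ (c τ).2 i) :
    (∀ γ : Ordinal, c (ι + δ * γ) = c ι) ∧
      (∀ τ, ι ≤ τ → ∃ σ, ι ≤ σ ∧ σ < ξ ∧ c τ = c σ) := by
  subst hδ
  have hc : IsLiminfRun α F c := by
    refine ⟨hsucc, hreg, fun l hl => Prod.ext ?_ (funext (hlim_reg l hl))⟩
    rw [limitConfig, ← hlim_state l hl, card_nat, Cardinal.toNat_natCast]
  have hδ0 : δ ≠ 0 := pos_iff_ne_zero.1 ((lt_add_iff_pos_right ι).1 hιξ)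
  have hge' : ∀ τ < δ, c (ι + 0) ≤ c (ι + τ) := by
    intro τ hτ
    rw [add_zero]
    rcases eq_or_ne τ 0 with rfl | hτ0
    · rw [add_zero]
    · exact hge _ ((lt_add_iff_pos_right ι).2 (pos_iff_ne_zero.2 hτ0))
        ((add_lt_add_iff_left ι).2 hτ)
  have hperiodic := (hc.comp_add ι).apply_eq_apply_mod hδ0 (by rw [add_zero, heq]) hge'
  refine ⟨fun γ => by simpa [mul_mod] using hperiodic (δ * γ), fun τ hτ => ?_⟩
  refine ⟨ι + (τ - ι) % δ, le_self_add, (add_lt_add_iff_left ι).2 (mod_lt _ hδ0), ?_⟩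
  simpa [Ordinal.add_sub_cancel_of_le hτ] using hperiodic (τ - ι)
end
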